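/- arXiv:math/0406355 — 3 statements merged into one kernel-verified Lean document; each statement's English description precedes it below -/
import Mathlib

section
/- Let p be a prime, q = p^e, k = q-1, and let d be an integer with d ≡ 1 (mod p) such that d(k+1)/(2k+1-r) ∈ ℤ for all 0 ≤ r ≤ k. Then for 0 ≤ r ≤ k and 0 ≤ n ≤ r, the integer (d(k+1)/(2k+1-r))·C(2k+1-r, n)·C(k-n, r-n) is congruent to 1 mod p if r = k and n = 0, and congruent to 0 mod p otherwise. -/
/-!
If `r < k`, then `2k + 1 - r = q + (k - r)` with `0 < k - r < q`, so `q = p ^ e` does not divide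
`2k + 1 - r`; since `(2k + 1 - r) c = d q`, the prime `p` must divide `c`. If `r = k`, then
`c = d ≡ 1`, and for `0 < n < q` the prime `p` divides `C(q, n)`.
-/

theorem Prime.dvd_of_mul_eq_mul_pow {M : Type*} [CommMonoidWithZero M] [IsCancelMulZero M]
    {p a b c : M} {e : ℕ} (hp : Prime p) (ha : ¬p ^ e ∣ a) (h : a * c = b * p ^ e) : p ∣ c :=
  by_contra fun hc => ha (hp.pow_dvd_of_dvd_mul_right e hc (h ▸ dvd_mul_left _ _))

theorem Int.prime_dvd_of_two_mul_add_one_sub_mul_eq {p e k r : ℕ} {c d : ℤ} (hp : p.Prime)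
    (hk : (k : ℤ) + 1 = (p : ℤ) ^ e) (hr : r < k)
    (hc : (2 * (k : ℤ) + 1 - r) * c = d * (k + 1)) : (p : ℤ) ∣ c := by
  refine Prime.dvd_of_mul_eq_mul_pow (Nat.prime_iff_prime_int.mp hp) ?_ (hk ▸ hc)
  have hsplit : 2 * (k : ℤ) + 1 - r = (p : ℤ) ^ e + (k - r) := by omega
  rw [hsplit, dvd_add_right dvd_rfl]
  intro hdvd
  have hkr : (k : ℤ) - r = 0 := Int.eq_zero_of_dvd_of_nonneg_of_lt (by omega) (by omega) hdvd
  omega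

theorem stmt_7_general (p : ℕ) (hp : p.Prime) (e : ℕ) (q : ℕ) (hq : q = p ^ e)
    (k : ℕ) (hk : k = q - 1) (d : ℤ) (hd : d ≡ 1 [ZMOD p]) :
    ∀ r : ℕ, r ≤ k → ∀ n : ℕ, n ≤ r → ∀ c : ℤ,
      (2 * (k : ℤ) + 1 - r) * c = d * (k + 1) →
        c * (Nat.choose (2 * k + 1 - r) n : ℤ) * (Nat.choose (k - n) (r - n) : ℤ)
          ≡ (if r = k ∧ n = 0 then 1 else 0) [ZMOD p] := by
  intro r hr n hn c hc
  have hq_pos : 0 < q := hq ▸ pow_pos hp.pos e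
  have hkq : (k : ℤ) + 1 = (p : ℤ) ^ e := by rw [← Nat.cast_pow, ← hq]; omega
  rcases hr.lt_or_eq with hlt | rfl
  · have hpc := Int.prime_dvd_of_two_mul_add_one_sub_mul_eq hp hkq hlt hc
    rw [if_neg (by omega)]
    exact ((hpc.mul_right _).mul_right _).modEq_zero_int
  · have hcd : c = d := mul_left_cancel₀ (by omega : (r : ℤ) + 1 ≠ 0) (by linarith)
    rcases eq_or_ne n 0 with rfl | hn0
    · simpa [hcd] using hd
    · have hchoose : p ∣ (2 * r + 1 - r).choose n := by
        rw [show 2 * r + 1 - r = p ^ e by omega]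
        exact hp.dvd_choose_pow hn0 (by omega)
      rw [if_neg (by omega)]
      exact (((Int.natCast_dvd_natCast.mpr hchoose).mul_left c).mul_right _).modEq_zero_int

theorem stmt_7 (p : ℕ) (hp : p.Prime) (e : ℕ) (he : 1 ≤ e) (q : ℕ) (hq : q = p ^ e)
    (k : ℕ) (hk : k = q - 1) (d : ℤ) (hd : d ≡ 1 [ZMOD p])
    (hdiv : ∀ r : ℕ, r ≤ k → (2 * (k : ℤ) + 1 - r) ∣ d * (k + 1)) :
    ∀ r : ℕ, r ≤ k → ∀ n : ℕ, n ≤ r → ∀ c : ℤ,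
      (2 * (k : ℤ) + 1 - r) * c = d * (k + 1) →
        c * (Nat.choose (2 * k + 1 - r) n : ℤ) * (Nat.choose (k - n) (r - n) : ℤ)
          ≡ (if r = k ∧ n = 0 then 1 else 0) [ZMOD p] :=
  stmt_7_general p hp e q hq k hk d hd
end

section
/- Let R = ℤ[X₁,…,X_m], S = ℤ[X₁,…,X_m,s,t], and let Eᵢ, Fᵢ, Gᵢ ∈ R (1 ≤ i ≤ n) satisfy ∑ EᵢGᵢ = 0 and ∑ FᵢGᵢ = 0. Let p be a prime, q = p^e. Suppose there exist k₁, k₂ ∈ ℕ and elements of R witnessing that (∑(EᵢGᵢ)^q)/p · (G₁⋯G_n)^{k₁} ∈ (G₁^{q+k₁},…,G_n^{q+k₁})R and (∑(FᵢGᵢ)^q)/p · (G₁⋯G_n)^{k₂} ∈ (G₁^{q+k₂},…,G_n^{q+k₂})R. Then for k = max{k₁,k₂}, (∑(sEᵢ+tFᵢ)^q Gᵢ^q)/p · (G₁⋯G_n)^{k} ∈ (G₁^{q+k},…,G_n^{q+k})S. -/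
open MvPolynomial

private lemma fresh' {A : Type*} [CommRing A] {p e : ℕ} (hp : p.Prime) (a b : A) :
    ∃ d : A, (p : A) * d = (a + b) ^ (p ^ e) - a ^ (p ^ e) - b ^ (p ^ e) := by
  set q := p ^ e with hq
  refine ⟨∑ j ∈ Finset.Ioo 0 q, a ^ j * b ^ (q - j) * ((q.choose j / p : ℕ) : A), ?_⟩
  rw [Finset.mul_sum]
  have hqpos : 0 < q := pow_pos hp.pos e
  have key : ∀ j ∈ Finset.Ioo 0 q, (p : A) * (a ^ j * b ^ (q - j) * ((q.choose j / p : ℕ) : A))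
      = a ^ j * b ^ (q - j) * ((q.choose j : ℕ) : A) := by
    intro j hj
    simp only [Finset.mem_Ioo] at hj
    have hd : p ∣ q.choose j := Nat.Prime.dvd_choose_pow hp hj.1.ne' hj.2.ne
    have h2 : (p * (q.choose j / p) : ℕ) = q.choose j := Nat.mul_div_cancel' hd
    calc (p : A) * (a ^ j * b ^ (q - j) * ((q.choose j / p : ℕ) : A))
        = a ^ j * b ^ (q - j) * (((p * (q.choose j / p) : ℕ)) : A) := by push_cast; ring
      _ = a ^ j * b ^ (q - j) * ((q.choose j : ℕ) : A) := by rw [h2]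
  rw [Finset.sum_congr rfl key]
  have expand := add_pow a b q
  have hset : Finset.range (q + 1) = insert 0 (insert q (Finset.Ioo 0 q)) := by
    ext j
    simp only [Finset.mem_range, Finset.mem_insert, Finset.mem_Ioo]
    omega
  rw [hset, Finset.sum_insert, Finset.sum_insert] at expand
  · rw [expand]
    simp [hqpos.ne']
    ring
  · simp
  · simp [hqpos.ne]

private lemma bump' {A : Type*} [CommRing A] {n q k₁ k : ℕ} (hk : k₁ ≤ k) (g : Fin n → A)
    (x : A) (h : x * (∏ i, g i) ^ k₁ ∈ Ideal.span (Set.range fun i => g i ^ (q + k₁))) :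
    x * (∏ i, g i) ^ k ∈ Ideal.span (Set.range fun i => g i ^ (q + k)) := by
  rw [Ideal.mem_span_range_iff_exists_fun] at h ⊢
  obtain ⟨c, hc⟩ := h
  refine ⟨fun i => c i * (∏ j ∈ Finset.univ.erase i, g j) ^ (k - k₁), ?_⟩
  have hx : x * (∏ i, g i) ^ k = (x * (∏ i, g i) ^ k₁) * (∏ i, g i) ^ (k - k₁) := by
    rw [mul_assoc, ← pow_add]; congr 2; omega
  rw [hx, ← hc, Finset.sum_mul]
  refine Finset.sum_congr rfl fun i _ => ?_
  have hi : g i * ∏ j ∈ Finset.univ.erase i, g j = ∏ j, g j :=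
    Finset.mul_prod_erase _ _ (Finset.mem_univ i)
  rw [← hi, mul_pow]
  have : q + k = (q + k₁) + (k - k₁) := by omega
  rw [this, pow_add]
  ring

private lemma mapmem' {A B : Type*} [CommRing A] [CommRing B] (f : A →+* B) {n : ℕ}
    (g : Fin n → A) {x : A} (h : x ∈ Ideal.span (Set.range g)) :
    f x ∈ Ideal.span (Set.range fun i => f (g i)) := by
  rw [Ideal.mem_span_range_iff_exists_fun] at h ⊢
  obtain ⟨c, hc⟩ := h
  exact ⟨fun i => f (c i), by simp only [← map_mul, ← map_sum, hc]⟩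

theorem stmt_10 (m n : ℕ) (p : ℕ) (hp : p.Prime) (e : ℕ) (he : 1 ≤ e) (q : ℕ)
    (hq : q = p ^ e)
    (E F G : Fin n → MvPolynomial (Fin m) ℤ)
    (hE : ∑ i, E i * G i = 0) (hF : ∑ i, F i * G i = 0)
    (k₁ k₂ : ℕ) (HE HF : MvPolynomial (Fin m) ℤ)
    (hHE : (p : MvPolynomial (Fin m) ℤ) * HE = ∑ i, (E i * G i) ^ q)
    (hHF : (p : MvPolynomial (Fin m) ℤ) * HF = ∑ i, (F i * G i) ^ q)
    (hmemE : HE * (∏ i, G i) ^ k₁ ∈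
      Ideal.span (Set.range fun i => G i ^ (q + k₁)))
    (hmemF : HF * (∏ i, G i) ^ k₂ ∈
      Ideal.span (Set.range fun i => G i ^ (q + k₂))) :
    -- `S = R[s,t]`, with `s = X 0`, `t = X 1`
    ∃ H : MvPolynomial (Fin 2) (MvPolynomial (Fin m) ℤ),
      (p : MvPolynomial (Fin 2) (MvPolynomial (Fin m) ℤ)) * H =
        ∑ i, (X 0 * C (E i) + X 1 * C (F i)) ^ q * C (G i) ^ q ∧
      H * (∏ i, C (G i)) ^ (max k₁ k₂) ∈
        Ideal.span (Set.range fun i =>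
          (C (G i) : MvPolynomial (Fin 2) (MvPolynomial (Fin m) ℤ)) ^ (q + max k₁ k₂)) := by
  set S := MvPolynomial (Fin 2) (MvPolynomial (Fin m) ℤ)
  set k := max k₁ k₂ with hk
  have hD : ∀ i : Fin n, ∃ d : S, (p : S) * d =
      (X 0 * C (E i) + X 1 * C (F i)) ^ q - (X 0 * C (E i)) ^ q - (X 1 * C (F i)) ^ q := by
    intro i
    subst hq
    exact fresh' hp _ _
  choose D hDp using hD
  refine ⟨X 0 ^ q * C HE + X 1 ^ q * C HF + ∑ i, D i * C (G i) ^ q, ?_, ?_⟩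
  · have hA : (p : S) * (X 0 ^ q * C HE) = ∑ i, (X 0 * C (E i)) ^ q * C (G i) ^ q := by
      have h1 : ∑ i, ((X 0 : S) * C (E i)) ^ q * C (G i) ^ q
          = X 0 ^ q * C (∑ i, (E i * G i) ^ q) := by
        rw [map_sum, Finset.mul_sum]
        refine Finset.sum_congr rfl fun i _ => ?_
        rw [mul_pow, map_pow, map_mul, mul_pow]
        ring
      rw [h1, ← hHE, map_mul, map_natCast]
      ring
    have hB : (p : S) * (X 1 ^ q * C HF) = ∑ i, (X 1 * C (F i)) ^ q * C (G i) ^ q := by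
      have h1 : ∑ i, ((X 1 : S) * C (F i)) ^ q * C (G i) ^ q
          = X 1 ^ q * C (∑ i, (F i * G i) ^ q) := by
        rw [map_sum, Finset.mul_sum]
        refine Finset.sum_congr rfl fun i _ => ?_
        rw [mul_pow, map_pow, map_mul, mul_pow]
        ring
      rw [h1, ← hHF, map_mul, map_natCast]
      ring
    have hCt : ∀ i : Fin n, (p : S) * (D i * C (G i) ^ q) =
        (X 0 * C (E i) + X 1 * C (F i)) ^ q * C (G i) ^ q
          - (X 0 * C (E i)) ^ q * C (G i) ^ q - (X 1 * C (F i)) ^ q * C (G i) ^ q := by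
      intro i
      rw [← mul_assoc, hDp i]
      ring
    rw [mul_add, mul_add, Finset.mul_sum, hA, hB, Finset.sum_congr rfl fun i _ => hCt i,
      Finset.sum_sub_distrib, Finset.sum_sub_distrib]
    ring
  · have memE : (C HE : S) * (∏ i, C (G i)) ^ k ∈
        Ideal.span (Set.range fun i => (C (G i) : S) ^ (q + k)) := by
      have h1 := mapmem' (C : MvPolynomial (Fin m) ℤ →+* S) _
        (bump' (le_max_left k₁ k₂) G HE hmemE)
      simp only [map_mul, map_pow, map_prod] at h1
      exact h1
    have memF : (C HF : S) * (∏ i, C (G i)) ^ k ∈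
        Ideal.span (Set.range fun i => (C (G i) : S) ^ (q + k)) := by
      have h1 := mapmem' (C : MvPolynomial (Fin m) ℤ →+* S) _
        (bump' (le_max_right k₁ k₂) G HF hmemF)
      simp only [map_mul, map_pow, map_prod] at h1
      exact h1
    rw [add_mul, add_mul, Finset.sum_mul]
    refine Ideal.add_mem _ (Ideal.add_mem _ ?_ ?_) (Ideal.sum_mem _ fun i _ => ?_)
    · rw [mul_assoc]
      exact Ideal.mul_mem_left _ _ memE
    · rw [mul_assoc]
      exact Ideal.mul_mem_left _ _ memF
    · have key : (C (G i) : S) ^ q * (∏ j, (C (G j) : S)) ^ k =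
          (∏ j ∈ Finset.univ.erase i, (C (G j) : S)) ^ k * C (G i) ^ (q + k) := by
        rw [← Finset.mul_prod_erase Finset.univ _ (Finset.mem_univ i), mul_pow, pow_add]
        ring
      rw [mul_assoc, key, ← mul_assoc]
      exact Ideal.mul_mem_left _ _ (Ideal.subset_span ⟨i, rfl⟩)
end

section
/- Let R = ℤ[s,t,u,v,w,x,y,z], p prime, q = p^e, k = q-1. Then (ut-xs)^{2k+1}(vz-wy)^{k+1}(vt-ys)^k(wt-zs)^k + (vt-ys)^{2k+1}(wx-uz)^{k+1}(wt-zs)^k(ut-xs)^k + (wt-zs)^{2k+1}(uy-vx)^{k+1}(ut-xs)^k(vt-ys)^k lies in the ideal (p(ut-xs)^{2k+1}, p(vt-ys)^{2k+1}, p(wt-zs)^{2k+1})R. -/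
/-!
Write `A = ut - xs`, `B = vt - ys`, `C = wt - zs`, `D = vz - wy`, `E = wx - uz`, `F = uy - vx`,
`n = 2k + 1`, and `H(P, Q) = ∑_{i<n} P^i Q^(n-1-i)`. Over `R[X]` put `ℓ_u = xX + u`, `ℓ_v = yX + v`,
`ℓ_w = zX + w`, `ℓ = tX + s`. Then `Bℓ_w - Cℓ_v = Dℓ` and cyclically, so `ℓ` times
`A^n D H(Bℓ_w, Cℓ_v) + B^n E H(Cℓ_u, Aℓ_w) + C^n F H(Aℓ_v, Bℓ_u)` telescopes to `0`; cancelling `ℓ`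
and taking coefficients of `X^k` gives a syzygy `A^n D c₁ + B^n E c₂ + C^n F c₃ = 0` over `ℤ`.

Modulo `p`, since `k + 1 = q` every binomial coefficient of `(x - y)^k` is `±1`, so
`∑_{i<q} x^i y^(q-1-i) = (x - y)^k`. Splitting the sum at `i = q` gives
`H(P, Q) = P^q ∑_{i<k} P^i Q^(k-1-i) + Q^k (P - Q)^k`. For `P = aX + b` the first term has no `X^k`
coefficient, as `P^q = a^q X^q + b^q` and the remaining sum has degree `< k`; the same binomial
coefficients compute the `X^k` coefficient of the second, giving `c₁ ≡ (BCD)^k`, `c₂ ≡ (CAE)^k`,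
`c₃ ≡ (ABF)^k`. Subtracting the syzygy, the sum equals
`A^n D ((BCD)^k - c₁) + B^n E ((CAE)^k - c₂) + C^n F ((ABF)^k - c₃) ∈ p (A^n, B^n, C^n)`.
-/

open Finset

namespace CharP

variable {S : Type*} [CommRing S] {p : ℕ} [Fact p.Prime] [CharP S p] {e k : ℕ}

theorem cast_choose_eq_neg_one_pow (hk : k + 1 = p ^ e) {i : ℕ} (hi : i ≤ k) :
    (k.choose i : S) = (-1) ^ i := by
  induction i with
  | zero => simp
  | succ i ih =>
    have hvanish : ((k + 1).choose (i + 1) : S) = 0 := by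
      rw [hk, CharP.cast_eq_zero_iff S p]
      exact (Fact.out : p.Prime).dvd_choose_pow i.succ_ne_zero (by omega)
    rw [Nat.choose_succ_succ', Nat.cast_add, ih (by omega)] at hvanish
    linear_combination hvanish

theorem sub_pow_eq_sum_antidiagonal (hk : k + 1 = p ^ e) (x y : S) :
    (x - y) ^ k = ∑ ij ∈ antidiagonal k, x ^ ij.1 * y ^ ij.2 := by
  have hsign : (-1 : S) ^ k = 1 := by simpa using (cast_choose_eq_neg_one_pow hk le_rfl).symm
  rw [sub_eq_add_neg, (Commute.all _ _).add_pow']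
  refine sum_congr rfl fun ij hij => ?_
  rw [HasAntidiagonal.mem_antidiagonal] at hij
  rw [nsmul_eq_mul, cast_choose_eq_neg_one_pow hk (by omega), neg_pow y]
  calc (-1 : S) ^ ij.1 * (x ^ ij.1 * ((-1) ^ ij.2 * y ^ ij.2))
      = (-1) ^ (ij.1 + ij.2) * (x ^ ij.1 * y ^ ij.2) := by ring
    _ = x ^ ij.1 * y ^ ij.2 := by rw [hij, hsign, one_mul]

theorem geom_sum₂_eq_sub_pow (hk : k + 1 = p ^ e) (x y : S) :
    ∑ i ∈ range (k + 1), x ^ i * y ^ (k + 1 - 1 - i) = (x - y) ^ k := by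
  rw [sub_pow_eq_sum_antidiagonal hk,
    Nat.sum_antidiagonal_eq_sum_range_succ (fun i j => x ^ i * y ^ j)]
  simp

end CharP

theorem geom_sum₂_add {R : Type*} [CommRing R] (x y : R) (m n : ℕ) :
    ∑ i ∈ range (m + n), x ^ i * y ^ (m + n - 1 - i) =
      x ^ m * ∑ i ∈ range n, x ^ i * y ^ (n - 1 - i)
        + y ^ n * ∑ i ∈ range m, x ^ i * y ^ (m - 1 - i) := by
  rw [sum_range_add, add_comm, mul_sum, mul_sum]
  congr 1
  · refine sum_congr rfl fun i _ => ?_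
    rw [pow_add, show m + n - 1 - (m + i) = n - 1 - i by omega]; ring
  · refine sum_congr rfl fun i hi => ?_
    rw [mem_range] at hi
    rw [show m + n - 1 - i = (m - 1 - i) + n by omega, pow_add]; ring

theorem cyclic_geom_sum₂_syzygy {T : Type*} [CommRing T] [IsDomain T]
    {a b c lu lv lw ℓ d e f : T} (hℓ : ℓ ≠ 0) (hd : b * lw - c * lv = d * ℓ)
    (he : c * lu - a * lw = e * ℓ) (hf : a * lv - b * lu = f * ℓ) (n : ℕ) :
    a ^ n * d * ∑ i ∈ range n, (b * lw) ^ i * (c * lv) ^ (n - 1 - i)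
      + b ^ n * e * ∑ i ∈ range n, (c * lu) ^ i * (a * lw) ^ (n - 1 - i)
      + c ^ n * f * ∑ i ∈ range n, (a * lv) ^ i * (b * lu) ^ (n - 1 - i) = 0 := by
  have hgeom {P Q δ : T} (h : P - Q = δ * ℓ) :
      δ * ℓ * ∑ i ∈ range n, P ^ i * Q ^ (n - 1 - i) = P ^ n - Q ^ n := by
    rw [← h, mul_comm, geom_sum₂_mul]
  refine (mul_eq_zero.mp ?_).resolve_left hℓ
  linear_combination a ^ n * hgeom hd + b ^ n * hgeom he + c ^ n * hgeom hf

namespace Polynomial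

variable {S : Type*} [CommRing S]

theorem coeff_linear_pow (a b : S) (n i : ℕ) :
    ((C a * X + C b) ^ n).coeff i = a ^ i * b ^ (n - i) * n.choose i := by
  have hcomp : (C a * X + C b) ^ n = ((X + C b) ^ n).comp (C a * X) := by simp
  rw [hcomp, comp_C_mul_X_coeff, coeff_X_add_C_pow]
  ring

theorem coeff_geom_sum₂_linear_self (a b c d : S) (n : ℕ) :
    (∑ i ∈ range n, (C a * X + C b) ^ i * (C c * X + C d) ^ (n - 1 - i)).coeff n = 0 := by
  rw [finsetSum_coeff]
  refine sum_eq_zero fun i hi => coeff_eq_zero_of_natDegree_lt ?_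
  rw [mem_range] at hi
  calc _ ≤ i * 1 + (n - 1 - i) * 1 :=
        natDegree_mul_le_of_le (natDegree_pow_le_of_le _ natDegree_linear_le)
          (natDegree_pow_le_of_le _ natDegree_linear_le)
    _ < n := by omega

noncomputable def linearGeomCoeff (a b c d : S) (n m : ℕ) : S :=
  (∑ i ∈ range n, (C a * X + C b) ^ i * (C c * X + C d) ^ (n - 1 - i)).coeff m

theorem map_linearGeomCoeff {S' : Type*} [CommRing S'] (f : S →+* S') (a b c d : S) (n m : ℕ) :
    f (linearGeomCoeff a b c d n m) = linearGeomCoeff (f a) (f b) (f c) (f d) n m := by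
  simp [linearGeomCoeff, ← coeff_map]

variable {p : ℕ} [Fact p.Prime] [CharP S p] {e k : ℕ}

theorem coeff_linear_pow_mul_linear_pow (hk : k + 1 = p ^ e) (a b c d : S) :
    ((C a * X + C b) ^ k * (C c * X + C d) ^ k).coeff k = (b * c - a * d) ^ k := by
  rw [coeff_mul, show b * c - a * d = -(a * d) - -(b * c) by ring,
    CharP.sub_pow_eq_sum_antidiagonal hk]
  refine sum_congr rfl fun ij hij => ?_
  rw [HasAntidiagonal.mem_antidiagonal] at hij
  rw [coeff_linear_pow, coeff_linear_pow, show k - ij.1 = ij.2 by omega,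
    show k - ij.2 = ij.1 by omega, CharP.cast_choose_eq_neg_one_pow hk (by omega),
    CharP.cast_choose_eq_neg_one_pow hk (by omega), neg_pow, neg_pow (b * c)]
  ring

theorem linearGeomCoeff_of_charP (hk : k + 1 = p ^ e) (a b c d : S) :
    linearGeomCoeff a b c d (2 * k + 1) k = (a * d - b * c) ^ k := by
  rw [linearGeomCoeff]
  set P := C a * X + C b
  set Q := C c * X + C d
  have hfrob : P ^ (k + 1) = C (a ^ (k + 1)) * X ^ (k + 1) + C (b ^ (k + 1)) := by
    rw [hk, add_pow_char_pow, mul_pow, C_pow, C_pow]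
  have hsub : P - Q = C (a - c) * X + C (b - d) := by simp only [P, Q, C_sub]; ring
  rw [show 2 * k + 1 = (k + 1) + k by ring, geom_sum₂_add, CharP.geom_sum₂_eq_sub_pow hk, hsub,
    coeff_add, hfrob, add_mul, coeff_add, mul_assoc, coeff_C_mul, coeff_X_pow_mul',
    if_neg (by omega), coeff_C_mul, coeff_geom_sum₂_linear_self,
    coeff_linear_pow_mul_linear_pow hk]
  ring

theorem natCast_dvd_linearGeomCoeff_sub {σ : Type*} {p e k : ℕ} (hp : p.Prime)
    (hk : k + 1 = p ^ e) (r₁ r₂ a b c d : MvPolynomial σ ℤ) :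
    (p : MvPolynomial σ ℤ) ∣ linearGeomCoeff (r₁ * a) (r₁ * b) (r₂ * c) (r₂ * d) (2 * k + 1) k
      - r₁ ^ k * r₂ ^ k * (a * d - b * c) ^ k := by
  have := Fact.mk hp
  have hfactor : r₁ * a * (r₂ * d) - r₁ * b * (r₂ * c) = r₁ * r₂ * (a * d - b * c) := by ring
  rw [← map_natCast (MvPolynomial.C : ℤ →+* MvPolynomial σ ℤ), MvPolynomial.C_dvd_iff_zmod,
    map_sub, map_linearGeomCoeff, linearGeomCoeff_of_charP hk, sub_eq_zero, ← map_mul, ← map_mul,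
    ← map_sub, ← map_pow, hfactor, mul_pow, mul_pow]

theorem linearGeomCoeff_syzygy {S : Type*} [CommRing S] [IsDomain S] (s t u v w x y z : S)
    (ht : t ≠ 0) (n m : ℕ) :
    (u * t - x * s) ^ n * (v * z - w * y) * linearGeomCoeff ((v * t - y * s) * z)
        ((v * t - y * s) * w) ((w * t - z * s) * y) ((w * t - z * s) * v) n m
      + (v * t - y * s) ^ n * (w * x - u * z) * linearGeomCoeff ((w * t - z * s) * x)
        ((w * t - z * s) * u) ((u * t - x * s) * z) ((u * t - x * s) * w) n m
      + (w * t - z * s) ^ n * (u * y - v * x) * linearGeomCoeff ((u * t - x * s) * y)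
        ((u * t - x * s) * v) ((v * t - y * s) * x) ((v * t - y * s) * u) n m = 0 := by
  have hℓ : C t * X + C s ≠ 0 := fun h => ht (by simpa using congr_arg (coeff · 1) h)
  have hscale (r a b : S) : C r * (C a * X + C b) = C (r * a) * X + C (r * b) := by
    simp only [C_mul]; ring
  have hsyz := cyclic_geom_sum₂_syzygy (a := C (u * t - x * s)) (b := C (v * t - y * s))
    (c := C (w * t - z * s)) (lu := C x * X + C u) (lv := C y * X + C v) (lw := C z * X + C w)
    (d := C (v * z - w * y)) (e := C (w * x - u * z)) (f := C (u * y - v * x)) hℓ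
    (by simp only [map_sub, map_mul]; ring) (by simp only [map_sub, map_mul]; ring)
    (by simp only [map_sub, map_mul]; ring) n
  simp only [hscale, ← C_pow, ← C_mul] at hsyz
  simpa only [linearGeomCoeff, coeff_add, coeff_C_mul, coeff_zero] using
    congr_arg (coeff · m) hsyz

end Polynomial

open MvPolynomial

theorem stmt_17_general (p : ℕ) (hp : p.Prime) (e : ℕ) (q : ℕ) (hq : q = p ^ e)
    (k : ℕ) (hk : k = q - 1) :
    let R := MvPolynomial (Fin 8) ℤ
    let s : R := X 0; let t : R := X 1; let u : R := X 2; let v : R := X 3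
    let w : R := X 4; let x : R := X 5; let y : R := X 6; let z : R := X 7
    (u * t - x * s) ^ (2 * k + 1) * (v * z - w * y) ^ (k + 1)
        * (v * t - y * s) ^ k * (w * t - z * s) ^ k
      + (v * t - y * s) ^ (2 * k + 1) * (w * x - u * z) ^ (k + 1)
        * (w * t - z * s) ^ k * (u * t - x * s) ^ k
      + (w * t - z * s) ^ (2 * k + 1) * (u * y - v * x) ^ (k + 1)
        * (u * t - x * s) ^ k * (v * t - y * s) ^ k ∈
      Ideal.span {(p : R) * (u * t - x * s) ^ (2 * k + 1),
        (p : R) * (v * t - y * s) ^ (2 * k + 1),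
        (p : R) * (w * t - z * s) ^ (2 * k + 1)} := by
  intro R s t u v w x y z
  have hk' : k + 1 = p ^ e := by rw [hk, hq, Nat.sub_add_cancel (Nat.one_le_pow _ _ hp.pos)]
  obtain ⟨g₁, hg₁⟩ := Polynomial.natCast_dvd_linearGeomCoeff_sub hp hk'
    (v * t - y * s) (w * t - z * s) z w y v
  obtain ⟨g₂, hg₂⟩ := Polynomial.natCast_dvd_linearGeomCoeff_sub hp hk'
    (w * t - z * s) (u * t - x * s) x u z w
  obtain ⟨g₃, hg₃⟩ := Polynomial.natCast_dvd_linearGeomCoeff_sub hp hk'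
    (u * t - x * s) (v * t - y * s) y v x u
  have hsyz := Polynomial.linearGeomCoeff_syzygy s t u v w x y z (X_ne_zero 1) (2 * k + 1) k
  refine Ideal.mem_span_insert.mpr ⟨-(v * z - w * y) * g₁, _,
    Ideal.mem_span_pair.mpr ⟨-(w * x - u * z) * g₂, -(u * y - v * x) * g₃, rfl⟩, ?_⟩
  linear_combination hsyz - (u * t - x * s) ^ (2 * k + 1) * (v * z - w * y) * hg₁
    - (v * t - y * s) ^ (2 * k + 1) * (w * x - u * z) * hg₂
    - (w * t - z * s) ^ (2 * k + 1) * (u * y - v * x) * hg₃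

theorem stmt_17 (p : ℕ) (hp : p.Prime) (e : ℕ) (he : 1 ≤ e) (q : ℕ) (hq : q = p ^ e)
    (k : ℕ) (hk : k = q - 1) :
    let R := MvPolynomial (Fin 8) ℤ
    let s : R := X 0; let t : R := X 1; let u : R := X 2; let v : R := X 3
    let w : R := X 4; let x : R := X 5; let y : R := X 6; let z : R := X 7
    (u * t - x * s) ^ (2 * k + 1) * (v * z - w * y) ^ (k + 1)
        * (v * t - y * s) ^ k * (w * t - z * s) ^ k
      + (v * t - y * s) ^ (2 * k + 1) * (w * x - u * z) ^ (k + 1)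
        * (w * t - z * s) ^ k * (u * t - x * s) ^ k
      + (w * t - z * s) ^ (2 * k + 1) * (u * y - v * x) ^ (k + 1)
        * (u * t - x * s) ^ k * (v * t - y * s) ^ k ∈
      Ideal.span {(p : R) * (u * t - x * s) ^ (2 * k + 1),
        (p : R) * (v * t - y * s) ^ (2 * k + 1),
        (p : R) * (w * t - z * s) ^ (2 * k + 1)} :=
  stmt_17_general p hp e q hq k hk
end
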